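/- arXiv:2304.14326 — 5 statements merged into one kernel-verified Lean document; each statement's English description precedes it below -/
import Mathlib

section
/- Let X be a finite state space partitioned into layers X₀,…,X_L with X₀ = {x₀} and X_L = {x_L}, let A be a nonempty finite action set, and let P be a transition function such that for each x ∈ X_k (k < L) and a ∈ A, P(·|x,a) is a probability distribution supported on X_{k+1}. Let q : X × A × X → [0,1] be nonnegative with q(x,a,x') = 0 unless x ∈ X_k and x' ∈ X_{k+1} for some k ∈ {0,…,L−1}. Then there exists a policy π with q = q^{P,π} if and only if the following three conditions hold: (i) for every k ∈ {0,…,L−1}, Σ_{x∈X_k} Σ_{a∈A} Σ_{x'∈X_{k+1}} q(x,a,x') = 1; (ii) for every k ∈ {1,…,L−1} and every x ∈ X_k, Σ_{a∈A} Σ_{x'∈X_{k+1}} q(x,a,x') = Σ_{x'∈X_{k−1}} Σ_{a∈A} q(x',a,x); and (iii) q(x,a,x') = q(x,a)·P(x'|x,a) for every x ∈ X_k, a ∈ A, x' ∈ X_{k+1}, where q(x,a) := Σ_{x'∈X_{k+1}} q(x,a,x'). -/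
/-!
If `q = q^{P,π}`, then the mass `∑ₐ q(x,a)` leaving a state is its reach probability `ρ(x)`,
the total reach probability of every layer is `1` (the policy and the transitions are
stochastic), and the conditions are read off from `q(x,a) = ρ(x) π(a|x)`.
Conversely, one takes `ρ(x)` to be the inflow into `x` (and `1` at `x₀`), which by flow
conservation equals the outflow `∑ₐ q(x,a)`, and `π(·|x)` to be `q(x,·)` normalized by it;
the induced-transition condition then gives `q(x,a,x') = ρ(x) π(a|x) P(x'|x,a)`.
-/

open Finset

section OccupancyMeasure

variable {X A : Type*} [Fintype X] {layer : X → ℕ}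

/-- The state-action occupancy `q(x,a)`. -/
def outflow (layer : X → ℕ) (q : X → A → X → ℝ) (x : X) (a : A) : ℝ :=
  ∑ x' ∈ univ.filter (fun x' => layer x' = layer x + 1), q x a x'

def inflow [Fintype A] (layer : X → ℕ) (q : X → A → X → ℝ) (x : X) : ℝ :=
  ∑ x'' ∈ univ.filter (fun x'' => layer x'' + 1 = layer x), ∑ a, q x'' a x

lemma filter_layer_eq_zero {x0 : X} (h0 : ∀ x, layer x = 0 ↔ x = x0) :
    univ.filter (fun x => layer x = 0) = {x0} := by
  ext x
  simp [h0]

lemma sum_filter_layer_succ_eq_one {P : X → ℝ} {x : X} (hPsum : ∑ x', P x' = 1)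
    (hPsupp : ∀ x', P x' ≠ 0 → layer x' = layer x + 1) :
    ∑ x' ∈ univ.filter (fun x' => layer x' = layer x + 1), P x' = 1 := by
  rw [sum_filter_of_ne fun x' _ => hPsupp x', hPsum]

lemma outflow_eq_mul {q P : X → A → X → ℝ} {x : X} {a : A} {r : ℝ}
    (hP : ∑ x' ∈ univ.filter (fun x' => layer x' = layer x + 1), P x a x' = 1)
    (hq : ∀ x', layer x' = layer x + 1 → q x a x' = r * P x a x') :
    outflow layer q x a = r := by
  rw [outflow, sum_congr rfl fun x' hx' => hq x' (mem_filter.mp hx').2, ← mul_sum, hP, mul_one]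

lemma sum_layer_succ_reach_eq [Fintype A] {P : X → A → X → ℝ} {π : X → A → ℝ} {reach : X → ℝ}
    {k : ℕ} (hπsum : ∀ x, ∑ a, π x a = 1)
    (hP : ∀ x a, layer x = k → ∑ x' ∈ univ.filter (fun x' => layer x' = k + 1), P x a x' = 1)
    (hreach : ∀ x', layer x' = k + 1 → reach x' =
      ∑ x ∈ univ.filter (fun x => layer x + 1 = layer x'), ∑ a, reach x * π x a * P x a x') :
    ∑ x' ∈ univ.filter (fun x' => layer x' = k + 1), reach x' =
      ∑ x ∈ univ.filter (fun x => layer x = k), reach x := by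
  calc ∑ x' ∈ univ.filter (fun x' => layer x' = k + 1), reach x'
      = ∑ x' ∈ univ.filter (fun x' => layer x' = k + 1),
          ∑ x ∈ univ.filter (fun x => layer x = k), ∑ a, reach x * π x a * P x a x' := by
        refine sum_congr rfl fun x' hx' => ?_
        have hx' : layer x' = k + 1 := (mem_filter.mp hx').2
        simp only [hreach x' hx', hx', Nat.add_right_cancel_iff]
    _ = ∑ x ∈ univ.filter (fun x => layer x = k),
          ∑ a, reach x * π x a * ∑ x' ∈ univ.filter (fun x' => layer x' = k + 1), P x a x' := by
        rw [sum_comm]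
        refine sum_congr rfl fun x _ => ?_
        rw [sum_comm]
        simp only [mul_sum]
    _ = ∑ x ∈ univ.filter (fun x => layer x = k), reach x := by
        refine sum_congr rfl fun x hx => ?_
        simp only [hP x _ (mem_filter.mp hx).2, mul_one]
        rw [← mul_sum, hπsum, mul_one]

theorem occupancy_conditions_of_policy [Fintype A] {L : ℕ} {P q : X → A → X → ℝ}
    {π : X → A → ℝ} {reach : X → ℝ} (x0 : X) (h0 : ∀ x, layer x = 0 ↔ x = x0)
    (hPsum : ∀ x a, layer x < L → ∑ x', P x a x' = 1)
    (hPsupp : ∀ x a x', layer x < L → P x a x' ≠ 0 → layer x' = layer x + 1)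
    (hπsum : ∀ x, ∑ a, π x a = 1) (hr0 : reach x0 = 1)
    (hreach : ∀ x' : X, 1 ≤ layer x' →
      reach x' = ∑ x ∈ univ.filter (fun x => layer x + 1 = layer x'),
        ∑ a, reach x * π x a * P x a x')
    (hq : ∀ x a x', layer x < L → layer x' = layer x + 1 →
      q x a x' = reach x * π x a * P x a x') :
    (∀ k < L, ∑ x ∈ univ.filter (fun x => layer x = k), ∑ a,
        ∑ x' ∈ univ.filter (fun x' => layer x' = k + 1), q x a x' = 1) ∧
      (∀ x : X, 1 ≤ layer x → layer x < L →
        ∑ a, outflow layer q x a = inflow layer q x) ∧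
      (∀ x a x', layer x < L → layer x' = layer x + 1 →
        q x a x' = outflow layer q x a * P x a x') := by
  have hP : ∀ x a, layer x < L →
      ∑ x' ∈ univ.filter (fun x' => layer x' = layer x + 1), P x a x' = 1 :=
    fun x a hx => sum_filter_layer_succ_eq_one (hPsum x a hx) (hPsupp x a · hx)
  have houtflow : ∀ x a, layer x < L → outflow layer q x a = reach x * π x a :=
    fun x a hx => outflow_eq_mul (hP x a hx) (hq x a · hx)
  have hsum_outflow : ∀ x, layer x < L → ∑ a, outflow layer q x a = reach x := by
    intro x hx
    simp only [houtflow x _ hx]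
    rw [← mul_sum, hπsum, mul_one]
  have hmass : ∀ k ≤ L, ∑ x ∈ univ.filter (fun x => layer x = k), reach x = 1 := by
    intro k
    induction k with
    | zero =>
      intro _
      rw [filter_layer_eq_zero h0, sum_singleton, hr0]
    | succ k ih =>
      intro hk
      rw [sum_layer_succ_reach_eq hπsum (fun x a hx => hx ▸ hP x a (by omega))
        (fun x' hx' => hreach x' (by omega)), ih (by omega)]
  refine ⟨fun k hk => ?_, fun x h1x hxL => ?_, fun x a x' hxL hx' => ?_⟩
  · rw [← hmass k hk.le]
    refine sum_congr rfl fun x hx => ?_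
    obtain rfl := (mem_filter.mp hx).2
    exact hsum_outflow x hk
  · rw [hsum_outflow x hxL, hreach x h1x]
    exact sum_congr rfl fun x'' hx'' => sum_congr rfl fun a _ =>
      (hq x'' a x (by have := (mem_filter.mp hx'').2; omega) (mem_filter.mp hx'').2.symm).symm
  · rw [hq x a x' hxL hx', houtflow x a hxL]

noncomputable def normalizeOrUniform [Fintype A] (w : A → ℝ) (a : A) : ℝ :=
  if ∑ b, w b = 0 then (Fintype.card A : ℝ)⁻¹ else w a / ∑ b, w b

lemma normalizeOrUniform_nonneg [Fintype A] {w : A → ℝ} (hw : ∀ a, 0 ≤ w a) (a : A) :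
    0 ≤ normalizeOrUniform w a := by
  unfold normalizeOrUniform
  split_ifs
  · positivity
  · exact div_nonneg (hw a) (sum_nonneg fun b _ => hw b)

lemma sum_normalizeOrUniform [Fintype A] [Nonempty A] (w : A → ℝ) :
    ∑ a, normalizeOrUniform w a = 1 := by
  unfold normalizeOrUniform
  split_ifs with h
  · simp [Fintype.card_ne_zero]
  · rw [← sum_div, div_self h]

lemma sum_mul_normalizeOrUniform [Fintype A] {w : A → ℝ} (hw : ∀ a, 0 ≤ w a) (a : A) :
    (∑ b, w b) * normalizeOrUniform w a = w a := by
  unfold normalizeOrUniform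
  split_ifs with h
  · rw [h, zero_mul, (sum_eq_zero_iff_of_nonneg fun b _ => hw b).mp h a (mem_univ a)]
  · exact mul_div_cancel₀ _ h

theorem exists_policy_of_occupancy_conditions [Fintype A] [Nonempty A] {L : ℕ}
    {P q : X → A → X → ℝ} (hlayer : ∀ x, layer x ≤ L) (x0 : X) (h0 : ∀ x, layer x = 0 ↔ x = x0)
    (hqnn : ∀ x a x', 0 ≤ q x a x') (hnorm : ∑ a, outflow layer q x0 a = 1)
    (hflow : ∀ x : X, 1 ≤ layer x → layer x < L → ∑ a, outflow layer q x a = inflow layer q x)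
    (htrans : ∀ x a x', layer x < L → layer x' = layer x + 1 →
      q x a x' = outflow layer q x a * P x a x') :
    ∃ π : X → A → ℝ, (∀ x a, 0 ≤ π x a) ∧ (∀ x, ∑ a, π x a = 1) ∧
      ∃ reach : X → ℝ, reach x0 = 1 ∧
        (∀ x' : X, 1 ≤ layer x' →
          reach x' = ∑ x ∈ univ.filter (fun x => layer x + 1 = layer x'),
            ∑ a, reach x * π x a * P x a x') ∧
        (∀ x a x', layer x < L → layer x' = layer x + 1 →
          q x a x' = reach x * π x a * P x a x') := by
  have houtflow_nonneg : ∀ x a, 0 ≤ outflow layer q x a :=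
    fun x a => sum_nonneg fun x' _ => hqnn x a x'
  let π : X → A → ℝ := fun x => normalizeOrUniform (outflow layer q x)
  let reach : X → ℝ := fun x => if layer x = 0 then 1 else inflow layer q x
  have hreach : ∀ x, layer x < L → reach x = ∑ a, outflow layer q x a := by
    intro x hx
    by_cases h : layer x = 0
    · obtain rfl := (h0 x).mp h
      simp only [reach, h, if_true, hnorm]
    · simp only [reach, if_neg h]
      exact (hflow x (by omega) hx).symm
  have hq : ∀ x a x', layer x < L → layer x' = layer x + 1 →
      q x a x' = reach x * π x a * P x a x' := by
    intro x a x' hx hx'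
    rw [hreach x hx, sum_mul_normalizeOrUniform (houtflow_nonneg x), htrans x a x' hx hx']
  refine ⟨π, fun x => normalizeOrUniform_nonneg (houtflow_nonneg x),
    fun x => sum_normalizeOrUniform _, reach, by simp [reach, (h0 x0).mpr rfl],
    fun x' hx' => ?_, hq⟩
  simp only [reach, if_neg (show layer x' ≠ 0 by omega)]
  refine sum_congr rfl fun x hx => sum_congr rfl fun a _ => hq x a x' ?_ ?_
  all_goals have := (mem_filter.mp hx).2; have := hlayer x'; omega

end OccupancyMeasure

theorem stmt0_general {X A : Type*} [Fintype X] [Fintype A] [Nonempty A]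
    (L : ℕ) (hL : 1 ≤ L)
    (layer : X → ℕ) (hlayer : ∀ x, layer x ≤ L)
    (x0 : X)
    (h0 : ∀ x, layer x = 0 ↔ x = x0)
    (P : X → A → X → ℝ)
    (hPsum : ∀ x a, layer x < L → ∑ x', P x a x' = 1)
    (hPsupp : ∀ x a x', layer x < L → P x a x' ≠ 0 → layer x' = layer x + 1)
    (q : X → A → X → ℝ)
    (hqnn : ∀ x a x', 0 ≤ q x a x') :
    (∃ π : X → A → ℝ, (∀ x a, 0 ≤ π x a) ∧ (∀ x, ∑ a, π x a = 1) ∧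
      ∃ reach : X → ℝ, reach x0 = 1 ∧
        (∀ x' : X, 1 ≤ layer x' →
          reach x' = ∑ x ∈ Finset.univ.filter (fun x => layer x + 1 = layer x'),
            ∑ a, reach x * π x a * P x a x') ∧
        (∀ x a x', layer x < L → layer x' = layer x + 1 →
          q x a x' = reach x * π x a * P x a x'))
    ↔
    ((∀ k < L, ∑ x ∈ Finset.univ.filter (fun x => layer x = k), ∑ a,
        ∑ x' ∈ Finset.univ.filter (fun x' => layer x' = k + 1), q x a x' = 1) ∧
      (∀ x : X, 1 ≤ layer x → layer x < L →
        ∑ a, ∑ x' ∈ Finset.univ.filter (fun x' => layer x' = layer x + 1), q x a x' =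
          ∑ x'' ∈ Finset.univ.filter (fun x'' => layer x'' + 1 = layer x), ∑ a, q x'' a x) ∧
      (∀ x a x', layer x < L → layer x' = layer x + 1 →
        q x a x' =
          (∑ y ∈ Finset.univ.filter (fun y => layer y = layer x + 1), q x a y) * P x a x')) := by
  constructor
  · rintro ⟨π, -, hπsum, reach, hr0, hreach, hq⟩
    exact occupancy_conditions_of_policy x0 h0 hPsum hPsupp hπsum hr0 hreach hq
  · rintro ⟨hnorm, hflow, htrans⟩
    have hnorm0 : ∑ a, outflow layer q x0 a = 1 := by
      simpa [outflow, filter_layer_eq_zero h0, (h0 x0).mpr rfl] using hnorm 0 hL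
    exact exists_policy_of_occupancy_conditions hlayer x0 h0 hqnn hnorm0 hflow htrans

/-- Characterization of valid occupancy measures of an episodic loop-free MDP
(Lemma 1, Rosenberg & Mansour): `q` is the occupancy measure `q^{P,π}` of some policy `π`
iff the normalization, flow-conservation, and induced-transition conditions hold. -/
theorem stmt0 {X A : Type*} [Fintype X] [Fintype A] [Nonempty A]
    (L : ℕ) (hL : 1 ≤ L)
    (layer : X → ℕ) (hlayer : ∀ x, layer x ≤ L)
    (x0 xL : X)
    (h0 : ∀ x, layer x = 0 ↔ x = x0)
    (hLsing : ∀ x, layer x = L ↔ x = xL)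
    (P : X → A → X → ℝ)
    (hPnn : ∀ x a x', 0 ≤ P x a x')
    (hPsum : ∀ x a, layer x < L → ∑ x', P x a x' = 1)
    (hPsupp : ∀ x a x', layer x < L → P x a x' ≠ 0 → layer x' = layer x + 1)
    (q : X → A → X → ℝ)
    (hqnn : ∀ x a x', 0 ≤ q x a x') (hq1 : ∀ x a x', q x a x' ≤ 1)
    (hqsupp : ∀ x a x', q x a x' ≠ 0 → layer x < L ∧ layer x' = layer x + 1) :
    (∃ π : X → A → ℝ, (∀ x a, 0 ≤ π x a) ∧ (∀ x, ∑ a, π x a = 1) ∧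
      ∃ reach : X → ℝ, reach x0 = 1 ∧
        (∀ x' : X, 1 ≤ layer x' →
          reach x' = ∑ x ∈ Finset.univ.filter (fun x => layer x + 1 = layer x'),
            ∑ a, reach x * π x a * P x a x') ∧
        (∀ x a x', layer x < L → layer x' = layer x + 1 →
          q x a x' = reach x * π x a * P x a x'))
    ↔
    ((∀ k < L, ∑ x ∈ Finset.univ.filter (fun x => layer x = k), ∑ a,
        ∑ x' ∈ Finset.univ.filter (fun x' => layer x' = k + 1), q x a x' = 1) ∧
      (∀ x : X, 1 ≤ layer x → layer x < L →
        ∑ a, ∑ x' ∈ Finset.univ.filter (fun x' => layer x' = layer x + 1), q x a x' =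
          ∑ x'' ∈ Finset.univ.filter (fun x'' => layer x'' + 1 = layer x), ∑ a, q x'' a x) ∧
      (∀ x a x', layer x < L → layer x' = layer x + 1 →
        q x a x' =
          (∑ y ∈ Finset.univ.filter (fun y => layer y = layer x + 1), q x a y) * P x a x')) :=
  stmt0_general L hL layer hlayer x0 h0 P hPsum hPsupp q hqnn
end

section
/- Fix d, T ∈ ℕ with T ≥ 1, reals L > 0, C > 0, E ≥ 0, and for each t ∈ {1,…,T+1} a nonempty closed convex set K_t ⊆ { q ∈ ℝ^d : 0 ≤ q_j ≤ 1 for all j, and Σ_j q_j ≤ L }. Let ℓ_1,…,ℓ_T ∈ ℝ^d be loss vectors with ℓ̄_t := max_{τ ≤ t} ‖ℓ_τ‖_∞ > 0 for all t, let q̂_1 ∈ K_1, and define q̂_{t+1} = Π_{K_{t+1}}(q̂_t − η_t ℓ_t) with η_t = 1/(ℓ̄_t C √T). Let q_1,…,q_T ∈ ℝ^d satisfy Σ_{t=1}^T ‖q_t − q̂_t‖₁ ≤ E. Then for every q ∈ ⋂_{t} K_t and every interval 1 ≤ t₁ ≤ t₂ ≤ T: Σ_{t=t₁}^{t₂} ℓ_tᵀ(q_t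 − q) ≤ ℓ̄_{t₁,t₂}·E + ℓ̄_{t₂}·L·C·√T + ℓ̄_{t₁,t₂}·(d/2)·(t₂−t₁+1)/(C√T), where ℓ̄_{t₁,t₂} := max_{t₁ ≤ t ≤ t₂} ‖ℓ_t‖_∞. -/
open Finset Matrix

/-- The ℓ₁ norm on `ℝ^d`. -/
noncomputable def l1 {d : ℕ} (x : Fin d → ℝ) : ℝ := ∑ i, |x i|

/-- The ℓ∞ norm on `ℝ^d`. -/
noncomputable def linf {d : ℕ} (x : Fin d → ℝ) : ℝ := ⨆ i, |x i|

/-- Dot product on `ℝ^d`. -/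
noncomputable def dotp {d : ℕ} (x y : Fin d → ℝ) : ℝ := ∑ i, x i * y i

/-- Squared Euclidean distance on `ℝ^d`. -/
noncomputable def sqdist {d : ℕ} (x y : Fin d → ℝ) : ℝ := ∑ i, (x i - y i) ^ 2

/-- `z` is the Euclidean (metric) projection of `p` onto `K`. -/
def IsEuclidProj {d : ℕ} (K : Set (Fin d → ℝ)) (p z : Fin d → ℝ) : Prop :=
  z ∈ K ∧ ∀ y ∈ K, sqdist z p ≤ sqdist y p

/-- `intervalMax ℓ a b = max_{a ≤ t ≤ b} ‖ℓ_t‖_∞` (as the supremum of a finite nonempty set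
of reals, for `a ≤ b`). -/
noncomputable def intervalMax {d : ℕ} (ℓ : ℕ → Fin d → ℝ) (a b : ℕ) : ℝ :=
  sSup ((fun t => linf (ℓ t)) '' Set.Icc a b)

/-!
Split `ℓ_tᵀ(q_t − q) = ℓ_tᵀ(q_t − q̂_t) + ℓ_tᵀ(q̂_t − q)`. By Hölder the first part sums to at
most `ℓ̄_{t₁,t₂} E`. For the second, the obtuse-angle property of the projection gives the
projected-gradient inequality
`ℓ_tᵀ(q̂_t − q) ≤ (‖q̂_t − q‖² − ‖q̂_{t+1} − q‖²) / (2η_t) + η_t ‖ℓ_t‖₂² / 2`.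
Since `1/η_t` is nondecreasing and `‖q̂_t − q‖² ≤ 2L` on the capped box, summation by parts
bounds the telescoping part by `ℓ̄_{t₂} C √T L`, and `‖ℓ_t‖₂² ≤ d ‖ℓ_t‖_∞ ℓ̄_t` bounds the rest.
-/

lemma linf_nonneg {d : ℕ} (x : Fin d → ℝ) : 0 ≤ linf x :=
  Real.iSup_nonneg fun _ => abs_nonneg _

lemma abs_le_linf {d : ℕ} (x : Fin d → ℝ) (i : Fin d) : |x i| ≤ linf x :=
  le_ciSup (f := fun i => |x i|) (Set.finite_range _).bddAbove i

lemma l1_nonneg {d : ℕ} (x : Fin d → ℝ) : 0 ≤ l1 x :=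
  sum_nonneg fun _ _ => abs_nonneg _

lemma sqdist_nonneg {d : ℕ} (x y : Fin d → ℝ) : 0 ≤ sqdist x y :=
  sum_nonneg fun _ _ => sq_nonneg _

lemma dotp_add_right {d : ℕ} (x y z : Fin d → ℝ) : dotp x (y + z) = dotp x y + dotp x z := by
  simp only [dotp, Pi.add_apply, mul_add, sum_add_distrib]

lemma dotp_le_linf_mul_l1 {d : ℕ} (x y : Fin d → ℝ) : dotp x y ≤ linf x * l1 y := by
  rw [dotp, l1, mul_sum]
  refine sum_le_sum fun i _ => ?_
  calc x i * y i ≤ |x i| * |y i| := (le_abs_self _).trans (abs_mul _ _).le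
    _ ≤ linf x * |y i| := by gcongr; exact abs_le_linf x i

lemma sum_sq_le_card_mul_linf_sq {d : ℕ} (x : Fin d → ℝ) : ∑ i, x i ^ 2 ≤ d * linf x ^ 2 := by
  have h := sum_le_card_nsmul univ (fun i => x i ^ 2) (linf x ^ 2) fun i _ => by
    rw [← sq_abs]
    exact pow_le_pow_left₀ (abs_nonneg _) (abs_le_linf x i) 2
  simpa using h

lemma sqdist_le_sum_add_sum {d : ℕ} {x y : Fin d → ℝ} (hx : ∀ j, 0 ≤ x j ∧ x j ≤ 1)
    (hy : ∀ j, 0 ≤ y j ∧ y j ≤ 1) : sqdist x y ≤ ∑ j, x j + ∑ j, y j := by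
  rw [sqdist, ← sum_add_distrib]
  gcongr with j
  nlinarith [hx j, hy j]

lemma le_intervalMax {d : ℕ} (ℓ : ℕ → Fin d → ℝ) {a b t : ℕ} (ha : a ≤ t) (hb : t ≤ b) :
    linf (ℓ t) ≤ intervalMax ℓ a b :=
  le_csSup ((Set.finite_Icc a b).image _).bddAbove ⟨t, ⟨ha, hb⟩, rfl⟩

lemma intervalMax_nonneg {d : ℕ} (ℓ : ℕ → Fin d → ℝ) {a b : ℕ} (h : a ≤ b) :
    0 ≤ intervalMax ℓ a b :=
  (linf_nonneg _).trans (le_intervalMax ℓ le_rfl h)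

lemma intervalMax_mono_right {d : ℕ} (ℓ : ℕ → Fin d → ℝ) {a b b' : ℕ} (hab : a ≤ b)
    (h : b ≤ b') : intervalMax ℓ a b ≤ intervalMax ℓ a b' :=
  csSup_le_csSup ((Set.finite_Icc a b').image _).bddAbove ((Set.nonempty_Icc.2 hab).image _)
    (Set.image_mono (Set.Icc_subset_Icc_right h))

lemma nonneg_of_forall_mul_add_nonneg {a b : ℝ} (h : ∀ c ∈ Set.Ioc (0 : ℝ) 1, 0 ≤ c * a + b) :
    0 ≤ b := by
  have hlim : Filter.Tendsto (fun c : ℝ => c * a + b) (nhdsWithin 0 (Set.Ioi 0)) (nhds b) := by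
    have hcont : Continuous fun c : ℝ => c * a + b := by fun_prop
    simpa using (hcont.tendsto 0).mono_left nhdsWithin_le_nhds
  exact ge_of_tendsto hlim (Filter.mem_of_superset (Ioc_mem_nhdsGT one_pos) h)

lemma IsEuclidProj.dotp_sub_nonneg {d : ℕ} {K : Set (Fin d → ℝ)} (hK : Convex ℝ K)
    {p z y : Fin d → ℝ} (h : IsEuclidProj K p z) (hy : y ∈ K) : 0 ≤ dotp (y - z) (z - p) := by
  suffices 0 ≤ 2 * dotp (y - z) (z - p) by linarith
  refine nonneg_of_forall_mul_add_nonneg (a := sqdist y z) fun c ⟨hc0, hc1⟩ => ?_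
  have hmin := h.2 _ (hK.add_smul_sub_mem h.1 hy ⟨hc0.le, hc1⟩)
  have hexp : sqdist (z + c • (y - z)) p =
      sqdist z p + c * (c * sqdist y z + 2 * dotp (y - z) (z - p)) := by
    simp only [sqdist, dotp, mul_sum, ← sum_add_distrib]
    refine sum_congr rfl fun i _ => ?_
    simp only [Pi.add_apply, Pi.smul_apply, Pi.sub_apply, smul_eq_mul]
    ring
  exact nonneg_of_mul_nonneg_right (by linarith) hc0

lemma IsEuclidProj.sqdist_le {d : ℕ} {K : Set (Fin d → ℝ)} (hK : Convex ℝ K)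
    {p z y : Fin d → ℝ} (h : IsEuclidProj K p z) (hy : y ∈ K) : sqdist z y ≤ sqdist p y := by
  have hexp : sqdist p y = sqdist z y + sqdist p z + 2 * dotp (y - z) (z - p) := by
    simp only [sqdist, dotp, mul_sum, ← sum_add_distrib]
    exact sum_congr rfl fun i _ => by simp only [Pi.sub_apply]; ring
  linarith [h.dotp_sub_nonneg hK hy, sqdist_nonneg p z]

lemma IsEuclidProj.dotp_sub_le {d : ℕ} {K : Set (Fin d → ℝ)} (hK : Convex ℝ K)
    {x g z y : Fin d → ℝ} {η : ℝ} (hη : 0 < η) (h : IsEuclidProj K (fun j => x j - η * g j) z)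
    (hy : y ∈ K) :
    dotp g (x - y) ≤ (sqdist x y - sqdist z y) / (2 * η) + η / 2 * ∑ i, g i ^ 2 := by
  have hexp : sqdist (fun j => x j - η * g j) y =
      sqdist x y - 2 * η * dotp g (x - y) + η ^ 2 * ∑ i, g i ^ 2 := by
    simp only [sqdist, dotp, mul_sum, ← sum_sub_distrib, ← sum_add_distrib]
    exact sum_congr rfl fun i _ => by simp only [Pi.sub_apply]; ring
  have hcontr := h.sqdist_le hK hy
  rw [hexp] at hcontr
  rw [div_add' _ _ _ (by positivity), le_div_iff₀ (by positivity)]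
  nlinarith

lemma IsEuclidProj.dotp_sub_le_of_linf_le {d : ℕ} {K : Set (Fin d → ℝ)} (hK : Convex ℝ K)
    {x g z y : Fin d → ℝ} {M c : ℝ} (hM : 0 < M) (hc : 0 < c) (hg : linf g ≤ M)
    (h : IsEuclidProj K (fun j => x j - 1 / (M * c) * g j) z) (hy : y ∈ K) :
    dotp g (x - y) ≤ M * c / 2 * (sqdist x y - sqdist z y) + d / (2 * c) * linf g := by
  have hstep := h.dotp_sub_le hK (by positivity) hy
  have hsq : ∑ i, g i ^ 2 ≤ d * (linf g * M) :=
    (sum_sq_le_card_mul_linf_sq g).trans <| by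
      rw [sq]; gcongr; exact linf_nonneg g
  calc dotp g (x - y)
      ≤ (sqdist x y - sqdist z y) / (2 * (1 / (M * c))) + 1 / (M * c) / 2 * ∑ i, g i ^ 2 := hstep
    _ ≤ (sqdist x y - sqdist z y) / (2 * (1 / (M * c))) + 1 / (M * c) / 2 * (d * (linf g * M)) := by
      gcongr
    _ = M * c / 2 * (sqdist x y - sqdist z y) + d / (2 * c) * linf g := by
      field_simp

lemma sum_Icc_mul_sub_succ_le {a D : ℕ → ℝ} {B : ℝ} {m n : ℕ} (hmn : m ≤ n) (ha : 0 ≤ a m)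
    (hmono : MonotoneOn a (Set.Icc m n)) (hD : ∀ t ∈ Set.Icc m (n + 1), 0 ≤ D t ∧ D t ≤ B) :
    ∑ t ∈ Icc m n, a t * (D t - D (t + 1)) ≤ a n * (B - D (n + 1)) := by
  induction n, hmn using Nat.le_induction with
  | base =>
    rw [Icc_self, sum_singleton]
    nlinarith [hD m ⟨le_rfl, by omega⟩]
  | succ n hmn ih =>
    rw [sum_Icc_succ_top (by omega)]
    have hih := ih (hmono.mono (Set.Icc_subset_Icc_right (by omega)))
      fun t ht => hD t ⟨ht.1, ht.2.trans (by omega)⟩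
    have han : a n ≤ a (n + 1) := hmono ⟨hmn, by omega⟩ ⟨by omega, le_rfl⟩ (by omega)
    have han₀ : 0 ≤ a n := ha.trans (hmono ⟨le_rfl, by omega⟩ ⟨hmn, by omega⟩ hmn)
    obtain ⟨hD₁, hD₁'⟩ := hD (n + 1) ⟨by omega, by omega⟩
    obtain ⟨hD₂, hD₂'⟩ := hD (n + 2) ⟨by omega, le_rfl⟩
    nlinarith

lemma sum_linf_le_mul_intervalMax {d : ℕ} (ℓ : ℕ → Fin d → ℝ) {a b : ℕ} (hab : a ≤ b) :
    ∑ t ∈ Icc a b, linf (ℓ t) ≤ ((b : ℝ) - a + 1) * intervalMax ℓ a b := by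
  have h := sum_le_card_nsmul (Icc a b) (fun t => linf (ℓ t)) (intervalMax ℓ a b)
    fun t ht => le_intervalMax ℓ (mem_Icc.1 ht).1 (mem_Icc.1 ht).2
  rwa [Nat.card_Icc, nsmul_eq_mul, Nat.cast_sub (by omega), Nat.cast_add, Nat.cast_one,
    add_sub_right_comm] at h

lemma iterate_mem {d : ℕ} {T : ℕ} {K : ℕ → Set (Fin d → ℝ)} {p qh : ℕ → Fin d → ℝ}
    (hq1 : qh 1 ∈ K 1) (hupd : ∀ t ∈ Icc 1 T, IsEuclidProj (K (t + 1)) (p t) (qh (t + 1))) :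
    ∀ t ∈ Icc 1 (T + 1), qh t ∈ K t := by
  intro t ht
  obtain ⟨ht₁, htT⟩ := mem_Icc.1 ht
  obtain rfl | ⟨s, hs, rfl⟩ : t = 1 ∨ ∃ s, 1 ≤ s ∧ t = s + 1 :=
    (eq_or_lt_of_le ht₁).imp Eq.symm fun h => ⟨t - 1, by omega, by omega⟩
  · exact hq1
  · exact (hupd s (mem_Icc.2 ⟨hs, by omega⟩)).1

lemma dotp_iterate_sub_le {d T : ℕ} {C : ℝ} (hC : 0 < C) {K : ℕ → Set (Fin d → ℝ)}
    (hKcv : ∀ t ∈ Icc 1 (T + 1), Convex ℝ (K t))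
    {ℓ : ℕ → Fin d → ℝ} (hpos : ∀ t ∈ Icc 1 T, 0 < intervalMax ℓ 1 t)
    {qh : ℕ → Fin d → ℝ}
    (hupd : ∀ t ∈ Icc 1 T,
      IsEuclidProj (K (t + 1))
        (fun j => qh t j - (1 / (intervalMax ℓ 1 t * C * Real.sqrt T)) * ℓ t j) (qh (t + 1)))
    {q : Fin d → ℝ} (hq : ∀ t ∈ Icc 1 (T + 1), q ∈ K t) {t : ℕ} (ht : t ∈ Icc 1 T) :
    dotp (ℓ t) (qh t - q) ≤
      intervalMax ℓ 1 t * (C * Real.sqrt T) / 2 * (sqdist (qh t) q - sqdist (qh (t + 1)) q) +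
        d / (2 * (C * Real.sqrt T)) * linf (ℓ t) := by
  have htK : t + 1 ∈ Icc 1 (T + 1) := by simp only [mem_Icc] at ht ⊢; omega
  have hproj := hupd t ht
  rw [mul_assoc] at hproj
  exact hproj.dotp_sub_le_of_linf_le (hKcv _ htK) (hpos t ht)
    (mul_pos hC (Real.sqrt_pos.2 (by norm_cast; exact (mem_Icc.1 ht).1.trans (mem_Icc.1 ht).2)))
    (le_intervalMax ℓ (mem_Icc.1 ht).1 le_rfl) (hq _ htK)

lemma sum_dotp_iterate_sub_le {d T : ℕ} {L C : ℝ} (hC : 0 < C) {K : ℕ → Set (Fin d → ℝ)}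
    (hKcv : ∀ t ∈ Icc 1 (T + 1), Convex ℝ (K t))
    (hKsub : ∀ t ∈ Icc 1 (T + 1),
      K t ⊆ {q : Fin d → ℝ | (∀ j, 0 ≤ q j ∧ q j ≤ 1) ∧ ∑ j, q j ≤ L})
    {ℓ : ℕ → Fin d → ℝ} (hpos : ∀ t ∈ Icc 1 T, 0 < intervalMax ℓ 1 t)
    {qh : ℕ → Fin d → ℝ} (hq1 : qh 1 ∈ K 1)
    (hupd : ∀ t ∈ Icc 1 T,
      IsEuclidProj (K (t + 1))
        (fun j => qh t j - (1 / (intervalMax ℓ 1 t * C * Real.sqrt T)) * ℓ t j) (qh (t + 1)))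
    {q : Fin d → ℝ} (hq : ∀ t ∈ Icc 1 (T + 1), q ∈ K t)
    {t₁ t₂ : ℕ} (h1 : 1 ≤ t₁) (h12 : t₁ ≤ t₂) (h2T : t₂ ≤ T) :
    ∑ t ∈ Icc t₁ t₂, dotp (ℓ t) (qh t - q) ≤
      intervalMax ℓ 1 t₂ * L * C * Real.sqrt T +
        intervalMax ℓ t₁ t₂ * (d / 2) * ((t₂ : ℝ) - t₁ + 1) / (C * Real.sqrt T) := by
  set c := C * Real.sqrt T
  have hc : 0 < c := mul_pos hC (Real.sqrt_pos.2 (by norm_cast; omega))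
  set a : ℕ → ℝ := fun t => intervalMax ℓ 1 t * c / 2
  set D : ℕ → ℝ := fun t => sqdist (qh t) q
  have hD : ∀ t ∈ Set.Icc t₁ (t₂ + 1), 0 ≤ D t ∧ D t ≤ 2 * L := fun t ht => by
    have htK : t ∈ Icc 1 (T + 1) := mem_Icc.2 ⟨h1.trans ht.1, ht.2.trans (by omega)⟩
    obtain ⟨hqhbox, hqhsum⟩ := hKsub t htK (iterate_mem hq1 hupd t htK)
    obtain ⟨hqbox, hqsum⟩ := hKsub t htK (hq t htK)
    exact ⟨sqdist_nonneg _ _, (sqdist_le_sum_add_sum hqhbox hqbox).trans (by linarith)⟩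
  have hstep : ∀ t ∈ Icc t₁ t₂,
      dotp (ℓ t) (qh t - q) ≤ a t * (D t - D (t + 1)) + d / (2 * c) * linf (ℓ t) :=
    fun t ht => dotp_iterate_sub_le hC hKcv hpos hupd hq
      (mem_Icc.2 ⟨h1.trans (mem_Icc.1 ht).1, (mem_Icc.1 ht).2.trans h2T⟩)
  have hmono : MonotoneOn a (Set.Icc t₁ t₂) := fun s hs t _ hst => by
    have := intervalMax_mono_right ℓ (h1.trans hs.1) hst
    simp only [a]
    gcongr
  have ha : 0 ≤ a t₁ := by have := intervalMax_nonneg ℓ h1; positivity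
  have hD₂ := (hD (t₂ + 1) ⟨by omega, le_rfl⟩).1
  have ha₂ : 0 ≤ a t₂ * D (t₂ + 1) :=
    mul_nonneg (ha.trans (hmono ⟨le_rfl, h12⟩ ⟨h12, le_rfl⟩ h12)) hD₂
  calc ∑ t ∈ Icc t₁ t₂, dotp (ℓ t) (qh t - q)
      ≤ ∑ t ∈ Icc t₁ t₂, (a t * (D t - D (t + 1)) + d / (2 * c) * linf (ℓ t)) := sum_le_sum hstep
    _ = ∑ t ∈ Icc t₁ t₂, a t * (D t - D (t + 1)) + d / (2 * c) * ∑ t ∈ Icc t₁ t₂, linf (ℓ t) := by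
      rw [sum_add_distrib, mul_sum]
    _ ≤ a t₂ * (2 * L - D (t₂ + 1)) +
          d / (2 * c) * (((t₂ : ℝ) - t₁ + 1) * intervalMax ℓ t₁ t₂) := by
      gcongr
      · exact sum_Icc_mul_sub_succ_le h12 ha hmono hD
      · exact sum_linf_le_mul_intervalMax ℓ h12
    _ = intervalMax ℓ 1 t₂ * L * C * Real.sqrt T +
          intervalMax ℓ t₁ t₂ * (d / 2) * ((t₂ : ℝ) - t₁ + 1) / c - a t₂ * D (t₂ + 1) := by
      simp only [a, c]
      field_simp
      ring
    _ ≤ _ := sub_le_self _ ha₂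

lemma sum_dotp_sub_le_intervalMax_mul {d T : ℕ} (ℓ : ℕ → Fin d → ℝ) {x y : ℕ → Fin d → ℝ}
    {E : ℝ} (hE : ∑ t ∈ Icc 1 T, l1 (x t - y t) ≤ E) {t₁ t₂ : ℕ} (h1 : 1 ≤ t₁) (h12 : t₁ ≤ t₂)
    (h2T : t₂ ≤ T) :
    ∑ t ∈ Icc t₁ t₂, dotp (ℓ t) (x t - y t) ≤ intervalMax ℓ t₁ t₂ * E := by
  calc ∑ t ∈ Icc t₁ t₂, dotp (ℓ t) (x t - y t)
      ≤ ∑ t ∈ Icc t₁ t₂, intervalMax ℓ t₁ t₂ * l1 (x t - y t) := sum_le_sum fun t ht =>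
        (dotp_le_linf_mul_l1 _ _).trans <| mul_le_mul_of_nonneg_right
          (le_intervalMax ℓ (mem_Icc.1 ht).1 (mem_Icc.1 ht).2) (l1_nonneg _)
    _ = intervalMax ℓ t₁ t₂ * ∑ t ∈ Icc t₁ t₂, l1 (x t - y t) := (mul_sum ..).symm
    _ ≤ intervalMax ℓ t₁ t₂ * E := mul_le_mul_of_nonneg_left
      ((sum_le_sum_of_subset_of_nonneg (Icc_subset_Icc h1 h2T) fun _ _ _ => l1_nonneg _).trans hE)
      (intervalMax_nonneg ℓ h12)

theorem stmt2_general {d : ℕ} (T : ℕ) (L C : ℝ) (hC : 0 < C)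
    (K : ℕ → Set (Fin d → ℝ))
    (hKcv : ∀ t ∈ Finset.Icc 1 (T + 1), Convex ℝ (K t))
    (hKsub : ∀ t ∈ Finset.Icc 1 (T + 1),
      K t ⊆ {q : Fin d → ℝ | (∀ j, 0 ≤ q j ∧ q j ≤ 1) ∧ ∑ j, q j ≤ L})
    (ℓ : ℕ → Fin d → ℝ)
    (hpos : ∀ t ∈ Finset.Icc 1 T, 0 < intervalMax ℓ 1 t)
    (E : ℝ)
    (qh : ℕ → Fin d → ℝ)
    (hq1 : qh 1 ∈ K 1)
    (hupd : ∀ t ∈ Finset.Icc 1 T,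
      IsEuclidProj (K (t + 1))
        (fun j => qh t j - (1 / (intervalMax ℓ 1 t * C * Real.sqrt T)) * ℓ t j)
        (qh (t + 1)))
    (qtrue : ℕ → Fin d → ℝ)
    (hdiff : ∑ t ∈ Finset.Icc 1 T, l1 (fun j => qtrue t j - qh t j) ≤ E)
    (q : Fin d → ℝ) (hq : ∀ t ∈ Finset.Icc 1 (T + 1), q ∈ K t)
    (t₁ t₂ : ℕ) (h1 : 1 ≤ t₁) (h12 : t₁ ≤ t₂) (h2T : t₂ ≤ T) :
    ∑ t ∈ Finset.Icc t₁ t₂, dotp (ℓ t) (fun j => qtrue t j - q j) ≤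
      intervalMax ℓ t₁ t₂ * E + intervalMax ℓ 1 t₂ * L * C * Real.sqrt T +
        intervalMax ℓ t₁ t₂ * (d / 2) * ((t₂ : ℝ) - t₁ + 1) / (C * Real.sqrt T) := by
  have hsplit : ∀ t, dotp (ℓ t) (fun j => qtrue t j - q j) =
      dotp (ℓ t) (qtrue t - qh t) + dotp (ℓ t) (qh t - q) := fun t => by
    rw [← dotp_add_right, sub_add_sub_cancel]; rfl
  rw [sum_congr rfl fun t _ => hsplit t, sum_add_distrib, add_assoc]
  exact add_le_add (sum_dotp_sub_le_intervalMax_mul ℓ hdiff h1 h12 h2T)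
    (sum_dotp_iterate_sub_le hC hKcv hKsub hpos hq1 hupd hq h1 h12 h2T)

/-- Deterministic core of the interval-regret guarantee of UC-O-GDPS: the iterates `q̂_t`
are produced by projected OGD with adaptive learning rate `η_t = 1/(ℓ̄_t C √T)` and the true
occupancy measures `q_t` satisfy `Σ_t ‖q_t − q̂_t‖₁ ≤ E`. -/
theorem stmt2 {d : ℕ} (T : ℕ) (hT : 1 ≤ T) (L C : ℝ) (hL : 0 < L) (hC : 0 < C)
    (K : ℕ → Set (Fin d → ℝ))
    (hKne : ∀ t ∈ Finset.Icc 1 (T + 1), (K t).Nonempty)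
    (hKcl : ∀ t ∈ Finset.Icc 1 (T + 1), IsClosed (K t))
    (hKcv : ∀ t ∈ Finset.Icc 1 (T + 1), Convex ℝ (K t))
    (hKsub : ∀ t ∈ Finset.Icc 1 (T + 1),
      K t ⊆ {q : Fin d → ℝ | (∀ j, 0 ≤ q j ∧ q j ≤ 1) ∧ ∑ j, q j ≤ L})
    (ℓ : ℕ → Fin d → ℝ)
    (hpos : ∀ t ∈ Finset.Icc 1 T, 0 < intervalMax ℓ 1 t)
    (E : ℝ) (hE : 0 ≤ E)
    (qh : ℕ → Fin d → ℝ)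
    (hq1 : qh 1 ∈ K 1)
    (hupd : ∀ t ∈ Finset.Icc 1 T,
      IsEuclidProj (K (t + 1))
        (fun j => qh t j - (1 / (intervalMax ℓ 1 t * C * Real.sqrt T)) * ℓ t j)
        (qh (t + 1)))
    (qtrue : ℕ → Fin d → ℝ)
    (hdiff : ∑ t ∈ Finset.Icc 1 T, l1 (fun j => qtrue t j - qh t j) ≤ E)
    (q : Fin d → ℝ) (hq : ∀ t ∈ Finset.Icc 1 (T + 1), q ∈ K t)
    (t₁ t₂ : ℕ) (h1 : 1 ≤ t₁) (h12 : t₁ ≤ t₂) (h2T : t₂ ≤ T) :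
    ∑ t ∈ Finset.Icc t₁ t₂, dotp (ℓ t) (fun j => qtrue t j - q j) ≤
      intervalMax ℓ t₁ t₂ * E + intervalMax ℓ 1 t₂ * L * C * Real.sqrt T +
        intervalMax ℓ t₁ t₂ * (d / 2) * ((t₂ : ℝ) - t₁ + 1) / (C * Real.sqrt T) :=
  stmt2_general T L C hC K hKcv hKsub ℓ hpos E qh hq1 hupd qtrue hdiff q hq t₁ t₂ h1 h12 h2T
end

section
/- Fix d, m, T ∈ ℕ, reals η > 0 and E ≥ 0. For t ∈ {1,…,T} let G_t ∈ ℝ^{d×m} have all entries in [−1,1], let q̂_t, q_t ∈ ℝ^d with Σ_{t=1}^T ‖q_t − q̂_t‖₁ ≤ E, let λ_1 = 0 ∈ ℝ^m, and suppose λ_{t+1,i} = max{ λ_{t,i} + η·(G_tᵀq̂_t)_i, 0 } for every t ∈ {1,…,T} and every i. Then max_{i ∈ {1,…,m}} Σ_{t=1}^T (G_tᵀ q_t)_i ≤ ‖λ_{T+1}‖₁/η + E. -/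
open Finset Matrix

/-! Since `max a 0 ≥ a`, each dual step raises `λ_{t,i}` by at least `η (G_tᵀ q̂_t)_i`, so these
increments telescope to at most `λ_{T+1,i} ≤ ‖λ_{T+1}‖₁`. Replacing `q̂_t` by `q_t` changes
`(G_tᵀ q)_i` by at most `‖q_t - q̂_t‖₁`, because the entries of `G_t` lie in `[-1, 1]`. -/

lemma le_l1 {d : ℕ} (x : Fin d → ℝ) (j : Fin d) : x j ≤ l1 x :=
  (le_abs_self _).trans <|
    Finset.single_le_sum (f := fun k => |x k|) (fun _ _ => abs_nonneg _) (Finset.mem_univ j)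

lemma transpose_mulVec_apply_le_l1 {d m : ℕ} (A : Matrix (Fin d) (Fin m) ℝ) (i : Fin m)
    (hA : ∀ j, |A j i| ≤ 1) (x : Fin d → ℝ) : (Aᵀ *ᵥ x) i ≤ l1 x := by
  simp only [Matrix.mulVec, dotProduct, Matrix.transpose_apply, l1]
  refine Finset.sum_le_sum fun j _ => ?_
  calc A j i * x j ≤ |A j i| * |x j| := abs_mul (A j i) (x j) ▸ le_abs_self _
    _ ≤ |x j| := mul_le_of_le_one_left (abs_nonneg _) (hA j)

lemma sum_Icc_le_sub_of_add_le_succ (x g : ℕ → ℝ) (T : ℕ)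
    (h : ∀ t ∈ Finset.Icc 1 T, x t + g t ≤ x (t + 1)) :
    ∑ t ∈ Finset.Icc 1 T, g t ≤ x (T + 1) - x 1 := by
  rw [← Finset.Ico_add_one_right_eq_Icc, ← Finset.sum_Ico_sub (f := x) (by omega : 1 ≤ T + 1)]
  refine Finset.sum_le_sum fun t ht => ?_
  have := h t (by rwa [← Finset.Ico_add_one_right_eq_Icc])
  linarith

theorem stmt9_general {d m : ℕ} (T : ℕ) (η E : ℝ) (hη : 0 < η)
    (G : ℕ → Matrix (Fin d) (Fin m) ℝ)
    (hG : ∀ t ∈ Finset.Icc 1 T, ∀ j i, |G t j i| ≤ 1)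
    (qtrue qh : ℕ → Fin d → ℝ)
    (hdiff : ∑ t ∈ Finset.Icc 1 T, l1 (fun j => qtrue t j - qh t j) ≤ E)
    (lam : ℕ → Fin m → ℝ)
    (hlam1 : ∀ i, lam 1 i = 0)
    (hupd : ∀ t ∈ Finset.Icc 1 T, ∀ i,
      lam (t + 1) i = max (lam t i + η * ((G t)ᵀ *ᵥ qh t) i) 0) :
    ∀ i, ∑ t ∈ Finset.Icc 1 T, ((G t)ᵀ *ᵥ qtrue t) i ≤ l1 (lam (T + 1)) / η + E := by
  intro i
  have hdual : ∑ t ∈ Finset.Icc 1 T, η * ((G t)ᵀ *ᵥ qh t) i ≤ lam (T + 1) i := by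
    have := sum_Icc_le_sub_of_add_le_succ (fun t => lam t i) (fun t => η * ((G t)ᵀ *ᵥ qh t) i) T
      fun t ht => hupd t ht i ▸ le_max_left _ _
    simpa [hlam1] using this
  have hhat : ∑ t ∈ Finset.Icc 1 T, ((G t)ᵀ *ᵥ qh t) i ≤ l1 (lam (T + 1)) / η := by
    rw [le_div_iff₀ hη, mul_comm, Finset.mul_sum]
    exact hdual.trans (le_l1 _ i)
  have hgap : ∑ t ∈ Finset.Icc 1 T, (((G t)ᵀ *ᵥ qtrue t) i - ((G t)ᵀ *ᵥ qh t) i) ≤ E := by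
    refine le_trans (Finset.sum_le_sum fun t ht => ?_) hdiff
    rw [← Pi.sub_apply, ← Matrix.mulVec_sub]
    exact transpose_mulVec_apply_le_l1 (G t) i (fun j => hG t ht j i) _
  rw [Finset.sum_sub_distrib] at hgap
  linarith

/-- Cumulative constraint violation bound from the unclipped dual update: for every
constraint `i`, `Σ_t (G_tᵀ q_t)_i ≤ ‖λ_{T+1}‖₁/η + E`. -/
theorem stmt9 {d m : ℕ} (T : ℕ) (η E : ℝ) (hη : 0 < η) (hE : 0 ≤ E)
    (G : ℕ → Matrix (Fin d) (Fin m) ℝ)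
    (hG : ∀ t ∈ Finset.Icc 1 T, ∀ j i, |G t j i| ≤ 1)
    (qtrue qh : ℕ → Fin d → ℝ)
    (hdiff : ∑ t ∈ Finset.Icc 1 T, l1 (fun j => qtrue t j - qh t j) ≤ E)
    (lam : ℕ → Fin m → ℝ)
    (hlam1 : ∀ i, lam 1 i = 0)
    (hupd : ∀ t ∈ Finset.Icc 1 T, ∀ i,
      lam (t + 1) i = max (lam t i + η * ((G t)ᵀ *ᵥ qh t) i) 0) :
    ∀ i, ∑ t ∈ Finset.Icc 1 T, ((G t)ᵀ *ᵥ qtrue t) i ≤ l1 (lam (T + 1)) / η + E :=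
  stmt9_general T η E hη G hG qtrue qh hdiff lam hlam1 hupd
end

section
/- Fix d, m, T ∈ ℕ and reals Λ ≥ 0, E ≥ 0. For t ∈ {1,…,T} let r_t ∈ [0,1]^d, let G_t ∈ ℝ^{d×m} have all entries in [−1,1], let λ_t ∈ ℝ^m with λ_t ≥ 0 componentwise and ‖λ_t‖₁ ≤ Λ, and let q_t, q̂_t ∈ ℝ^d with Σ_{t=1}^T ‖q_t − q̂_t‖₁ ≤ E. Let q̃ ∈ ℝ^d satisfy (G_tᵀq̃)_i ≤ 0 for all t and i. Define ℓ_t := G_t λ_t − r_t, R^P := Σ_{t=1}^T ℓ_tᵀ(q_t − q̃), and R^D := −Σ_{t=1}^T λ_tᵀ G_tᵀ q̂_t. Then Σ_{t=1}^T r_tᵀ q_t ≥ Σ_{t=1}^T r_tᵀ q̃ − Λ·E − R^D − R^P. -/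
open Finset Matrix

lemma dotp_eq_dotProduct {d : ℕ} (x y : Fin d → ℝ) : dotp x y = x ⬝ᵥ y := rfl

lemma dotp_transpose_mulVec {d m : ℕ} (A : Matrix (Fin d) (Fin m) ℝ) (x : Fin m → ℝ)
    (y : Fin d → ℝ) : dotp x (Aᵀ *ᵥ y) = dotp (A *ᵥ x) y := by
  rw [dotp_eq_dotProduct, dotProduct_mulVec, vecMul_transpose, dotp_eq_dotProduct]

lemma dotp_nonpos {d : ℕ} {x y : Fin d → ℝ} (hx : ∀ i, 0 ≤ x i) (hy : ∀ i, y i ≤ 0) :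
    dotp x y ≤ 0 :=
  Finset.sum_nonpos fun i _ => mul_nonpos_of_nonneg_of_nonpos (hx i) (hy i)

lemma dotp_le_mul_l1 {d : ℕ} {u : Fin d → ℝ} {c : ℝ} (hu : ∀ j, |u j| ≤ c) (v : Fin d → ℝ) :
    dotp u v ≤ c * l1 v := by
  rw [dotp, l1, Finset.mul_sum]
  refine Finset.sum_le_sum fun j _ => ?_
  calc u j * v j ≤ |u j| * |v j| := by rw [← abs_mul]; exact le_abs_self _
    _ ≤ c * |v j| := mul_le_mul_of_nonneg_right (hu j) (abs_nonneg _)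

lemma abs_mulVec_apply_le_l1 {d m : ℕ} {A : Matrix (Fin d) (Fin m) ℝ} {j : Fin d}
    (hA : ∀ i, |A j i| ≤ 1) (x : Fin m → ℝ) : |(A *ᵥ x) j| ≤ l1 x :=
  calc |(A *ᵥ x) j| = |∑ i, A j i * x i| := rfl
    _ ≤ ∑ i, |A j i| * |x i| := by
        simpa only [abs_mul] using Finset.abs_sum_le_sum_abs (fun i => A j i * x i) univ
    _ ≤ ∑ i, |x i| := Finset.sum_le_sum fun i _ =>
        mul_le_of_le_one_left (abs_nonneg (x i)) (hA i)

/-- One round of the primal–dual decomposition: `q̃` is compared with `q` through the primal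
loss, and the dual term is evaluated at `q̂` instead of `q`, at the price of `Λ ‖q - q̂‖₁`. -/
lemma round_reward_gap_le {d m : ℕ} {Λ : ℝ} {G : Matrix (Fin d) (Fin m) ℝ} {lam : Fin m → ℝ}
    (hG : ∀ j i, |G j i| ≤ 1) (hlnn : ∀ i, 0 ≤ lam i) (hl1 : l1 lam ≤ Λ)
    {qmix : Fin d → ℝ} (hqmix : ∀ i, (Gᵀ *ᵥ qmix) i ≤ 0) (r q qh : Fin d → ℝ) :
    dotp r qmix - dotp r q ≤
      dotp (fun j => (G *ᵥ lam) j - r j) (fun j => q j - qmix j)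
        - dotp lam (Gᵀ *ᵥ qh) + Λ * l1 (fun j => q j - qh j) := by
  have hGlam : ∀ j, |(G *ᵥ lam) j| ≤ Λ := fun j => (abs_mulVec_apply_le_l1 (hG j) lam).trans hl1
  have hmix : dotp (G *ᵥ lam) qmix ≤ 0 := dotp_transpose_mulVec G lam qmix ▸ dotp_nonpos hlnn hqmix
  have hdev : dotp (G *ᵥ lam) (fun j => qh j - q j) ≤ Λ * l1 (fun j => q j - qh j) := by
    have hsymm : l1 (fun j => q j - qh j) = l1 (fun j => qh j - q j) := by
      simp only [l1, abs_sub_comm]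
    rw [hsymm]
    exact dotp_le_mul_l1 hGlam _
  have hexpand : dotp (fun j => (G *ᵥ lam) j - r j) (fun j => q j - qmix j)
      = dotp (G *ᵥ lam) q - dotp (G *ᵥ lam) qmix - dotp r q + dotp r qmix := by
    simp only [dotp_eq_dotProduct]
    change (G *ᵥ lam - r) ⬝ᵥ (q - qmix) = _
    simp only [sub_dotProduct, dotProduct_sub]
    ring
  have hdev' : dotp (G *ᵥ lam) (fun j => qh j - q j) = dotp (G *ᵥ lam) qh - dotp (G *ᵥ lam) q := by
    simp only [dotp_eq_dotProduct]
    exact dotProduct_sub _ _ _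
  rw [dotp_transpose_mulVec]
  linarith

theorem stmt11_general {d m : ℕ} (T : ℕ) (Λ E : ℝ) (hΛ : 0 ≤ Λ)
    (r : ℕ → Fin d → ℝ)
    (G : ℕ → Matrix (Fin d) (Fin m) ℝ)
    (hG : ∀ t ∈ Finset.Icc 1 T, ∀ j i, |G t j i| ≤ 1)
    (lam : ℕ → Fin m → ℝ)
    (hlnn : ∀ t ∈ Finset.Icc 1 T, ∀ i, 0 ≤ lam t i)
    (hl1 : ∀ t ∈ Finset.Icc 1 T, l1 (lam t) ≤ Λ)
    (qtrue qh : ℕ → Fin d → ℝ)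
    (hdiff : ∑ t ∈ Finset.Icc 1 T, l1 (fun j => qtrue t j - qh t j) ≤ E)
    (qmix : Fin d → ℝ)
    (hqmix : ∀ t ∈ Finset.Icc 1 T, ∀ i, ((G t)ᵀ *ᵥ qmix) i ≤ 0)
    (RP RD : ℝ)
    (hRP : RP = ∑ t ∈ Finset.Icc 1 T,
      dotp (fun j => (G t *ᵥ lam t) j - r t j) (fun j => qtrue t j - qmix j))
    (hRD : RD = -∑ t ∈ Finset.Icc 1 T, dotp (lam t) ((G t)ᵀ *ᵥ qh t)) :
    ∑ t ∈ Finset.Icc 1 T, dotp (r t) qmix - Λ * E - RD - RP ≤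
      ∑ t ∈ Finset.Icc 1 T, dotp (r t) (qtrue t) := by
  have hrounds := Finset.sum_le_sum fun t ht =>
    round_reward_gap_le (hG t ht) (hlnn t ht) (hl1 t ht) (hqmix t ht) (r t) (qtrue t) (qh t)
  have hdrift := mul_le_mul_of_nonneg_left hdiff hΛ
  simp only [Finset.sum_sub_distrib, Finset.sum_add_distrib, ← Finset.mul_sum] at hrounds
  linarith

/-- Deterministic reward lower bound for the adversarial-constraint analysis of PDGD-OPS. -/
theorem stmt11 {d m : ℕ} (T : ℕ) (Λ E : ℝ) (hΛ : 0 ≤ Λ) (hE : 0 ≤ E)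
    (r : ℕ → Fin d → ℝ) (hr : ∀ t ∈ Finset.Icc 1 T, ∀ j, r t j ∈ Set.Icc (0 : ℝ) 1)
    (G : ℕ → Matrix (Fin d) (Fin m) ℝ)
    (hG : ∀ t ∈ Finset.Icc 1 T, ∀ j i, |G t j i| ≤ 1)
    (lam : ℕ → Fin m → ℝ)
    (hlnn : ∀ t ∈ Finset.Icc 1 T, ∀ i, 0 ≤ lam t i)
    (hl1 : ∀ t ∈ Finset.Icc 1 T, l1 (lam t) ≤ Λ)
    (qtrue qh : ℕ → Fin d → ℝ)
    (hdiff : ∑ t ∈ Finset.Icc 1 T, l1 (fun j => qtrue t j - qh t j) ≤ E)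
    (qmix : Fin d → ℝ)
    (hqmix : ∀ t ∈ Finset.Icc 1 T, ∀ i, ((G t)ᵀ *ᵥ qmix) i ≤ 0)
    (RP RD : ℝ)
    (hRP : RP = ∑ t ∈ Finset.Icc 1 T,
      dotp (fun j => (G t *ᵥ lam t) j - r t j) (fun j => qtrue t j - qmix j))
    (hRD : RD = -∑ t ∈ Finset.Icc 1 T, dotp (lam t) ((G t)ᵀ *ᵥ qh t)) :
    ∑ t ∈ Finset.Icc 1 T, dotp (r t) qmix - Λ * E - RD - RP ≤
      ∑ t ∈ Finset.Icc 1 T, dotp (r t) (qtrue t) :=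
  stmt11_general T Λ E hΛ r G hG lam hlnn hl1 qtrue qh hdiff qmix hqmix RP RD hRP hRD
end

section
/- Let X be a finite state space partitioned into layers X₀,…,X_L with X₀ = {x₀}, let A be a finite action set, let P and P' be two transition functions on this layered structure, and let π be a policy. Then for every k ∈ {1,…,L−1}: Σ_{x∈X_k} Σ_{a∈A} | q^{P',π}(x,a) − q^{P,π}(x,a) | ≤ Σ_{s=0}^{k−1} Σ_{x_s∈X_s} Σ_{a_s∈A} q^{P,π}(x_s,a_s) · ‖P'(·|x_s,a_s) − P(·|x_s,a_s)‖₁, where ‖P'(·|x,a) − P(·|x,a)‖₁ := Σ_{x'∈X} |P'(x'|x,a) − P(x'|x,a)|. -/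
/-!
Write `Δ = r' - r` for the difference of the two reach probabilities. Subtracting the two
recursions gives, for `x'` in layer `m + 1`,
`Δ x' = ∑ x a, Δ x · π(a|x) · P'(x'|x,a) + r x · π(a|x) · (P'(x'|x,a) - P(x'|x,a))`,
so, since `π` and `P'` are (sub)stochastic, the `ℓ¹` norm of `Δ` on layer `m + 1` is at most
its norm on layer `m` plus the `q^{P,π}`-weighted `ℓ¹` distance between `P'` and `P` on layer `m`.
As `Δ` vanishes on layer `0`, summing these increments gives the bound.
-/

open Finset

namespace LayeredMDP

variable {X A : Type*} [Fintype X] [Fintype A] (layer : X → ℕ) (π : X → A → ℝ)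

def IsReach (P : X → A → X → ℝ) (r : X → ℝ) : Prop :=
  ∀ x' : X, 1 ≤ layer x' →
    r x' = ∑ x ∈ univ.filter (fun x => layer x + 1 = layer x'), ∑ a, r x * π x a * P x a x'

variable {layer π} {P P' : X → A → X → ℝ} {r r' : X → ℝ}

theorem IsReach.nonneg (hr : IsReach layer π P r) (hπnn : ∀ x a, 0 ≤ π x a)
    (hPnn : ∀ x a x', 0 ≤ P x a x') (hr0 : ∀ x, layer x = 0 → 0 ≤ r x) (x : X) : 0 ≤ r x := by
  induction hx : layer x generalizing x with
  | zero => exact hr0 x hx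
  | succ n ih =>
    rw [hr x (by omega)]
    refine sum_nonneg fun y hy => sum_nonneg fun a _ => ?_
    have hy : layer y = n := by have := (mem_filter.1 hy).2; omega
    exact mul_nonneg (mul_nonneg (ih y hy) (hπnn y a)) (hPnn y a x)

theorem IsReach.sub_eq_sum (hr : IsReach layer π P r) (hr' : IsReach layer π P' r') {m : ℕ}
    {x' : X} (hx' : layer x' = m + 1) :
    r' x' - r x' = ∑ x ∈ univ.filter (fun x => layer x = m), ∑ a,
      ((r' x - r x) * π x a * P' x a x' + r x * π x a * (P' x a x' - P x a x')) := by
  have hlayer : univ.filter (fun x => layer x + 1 = layer x') = univ.filter (layer · = m) :=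
    filter_congr fun x _ => by omega
  rw [hr' x' (by omega), hr x' (by omega), hlayer, ← sum_sub_distrib]
  refine sum_congr rfl fun x _ => ?_
  rw [← sum_sub_distrib]
  exact sum_congr rfl fun a _ => by ring

theorem IsReach.abs_sub_le_sum (hr : IsReach layer π P r) (hr' : IsReach layer π P' r')
    (hπnn : ∀ x a, 0 ≤ π x a) (hP'nn : ∀ x a x', 0 ≤ P' x a x') (hrnn : ∀ x, 0 ≤ r x) {m : ℕ}
    {x' : X} (hx' : layer x' = m + 1) :
    |r' x' - r x'| ≤ ∑ x ∈ univ.filter (fun x => layer x = m), ∑ a,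
      (|r' x - r x| * π x a * P' x a x' + r x * π x a * |P' x a x' - P x a x'|) := by
  rw [hr.sub_eq_sum hr' hx']
  refine (abs_sum_le_sum_abs _ _).trans <| sum_le_sum fun x _ =>
    (abs_sum_le_sum_abs _ _).trans <| sum_le_sum fun a _ => (abs_add_le _ _).trans_eq ?_
  simp only [abs_mul, abs_of_nonneg (hπnn x a), abs_of_nonneg (hP'nn x a x'),
    abs_of_nonneg (hrnn x)]

theorem IsReach.sum_abs_sub_succ_le (hr : IsReach layer π P r) (hr' : IsReach layer π P' r')
    (hπnn : ∀ x a, 0 ≤ π x a) (hπsum : ∀ x, ∑ a, π x a ≤ 1) (hP'nn : ∀ x a x', 0 ≤ P' x a x')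
    (hrnn : ∀ x, 0 ≤ r x) (m : ℕ) (hP'sum : ∀ x a, layer x = m → ∑ x', P' x a x' ≤ 1) :
    ∑ x' ∈ univ.filter (fun x => layer x = m + 1), |r' x' - r x'| ≤
      ∑ x ∈ univ.filter (fun x => layer x = m), |r' x - r x| +
        ∑ x ∈ univ.filter (fun x => layer x = m), ∑ a,
          r x * π x a * ∑ x', |P' x a x' - P x a x'| := by
  set next := univ.filter (fun x => layer x = m + 1)
  calc ∑ x' ∈ next, |r' x' - r x'|
      ≤ ∑ x' ∈ next, ∑ x ∈ univ.filter (fun x => layer x = m), ∑ a,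
          (|r' x - r x| * π x a * P' x a x' + r x * π x a * |P' x a x' - P x a x'|) :=
        sum_le_sum fun x' hx' => hr.abs_sub_le_sum hr' hπnn hP'nn hrnn (mem_filter.1 hx').2
    _ = ∑ x ∈ univ.filter (fun x => layer x = m), ∑ a,
          (|r' x - r x| * π x a * ∑ x' ∈ next, P' x a x' +
            r x * π x a * ∑ x' ∈ next, |P' x a x' - P x a x'|) := by
        rw [sum_comm]
        refine sum_congr rfl fun x _ => ?_
        rw [sum_comm]
        simp only [sum_add_distrib, mul_sum]
    _ ≤ ∑ x ∈ univ.filter (fun x => layer x = m), ∑ a,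
          (|r' x - r x| * π x a + r x * π x a * ∑ x', |P' x a x' - P x a x'|) := by
        refine sum_le_sum fun x hx => sum_le_sum fun a _ => ?_
        have hP'next : ∑ x' ∈ next, P' x a x' ≤ 1 :=
          (sum_le_univ_sum_of_nonneg (hP'nn x a)).trans (hP'sum x a (mem_filter.1 hx).2)
        exact add_le_add
          (mul_le_of_le_one_right (mul_nonneg (abs_nonneg _) (hπnn x a)) hP'next)
          (mul_le_mul_of_nonneg_left (sum_le_univ_sum_of_nonneg fun _ => abs_nonneg _)
            (mul_nonneg (hrnn x) (hπnn x a)))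
    _ ≤ _ := by
        rw [← sum_add_distrib]
        refine sum_le_sum fun x _ => ?_
        rw [sum_add_distrib, ← mul_sum]
        gcongr
        exact mul_le_of_le_one_right (abs_nonneg _) (hπsum x)

theorem IsReach.sum_abs_sub_le (hr : IsReach layer π P r) (hr' : IsReach layer π P' r')
    (hπnn : ∀ x a, 0 ≤ π x a) (hπsum : ∀ x, ∑ a, π x a ≤ 1) (hP'nn : ∀ x a x', 0 ≤ P' x a x')
    (hrnn : ∀ x, 0 ≤ r x) (h0 : ∀ x, layer x = 0 → r' x = r x) (k : ℕ)
    (hP'sum : ∀ x a, layer x < k → ∑ x', P' x a x' ≤ 1) :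
    ∑ x ∈ univ.filter (fun x => layer x = k), |r' x - r x| ≤
      ∑ s ∈ range k, ∑ x ∈ univ.filter (fun x => layer x = s), ∑ a,
        r x * π x a * ∑ x', |P' x a x' - P x a x'| := by
  induction k with
  | zero =>
    rw [range_zero, sum_empty]
    exact (sum_eq_zero fun x hx => by rw [h0 x (mem_filter.1 hx).2, sub_self, abs_zero]).le
  | succ k ih =>
    rw [sum_range_succ]
    refine (hr.sum_abs_sub_succ_le hr' hπnn hπsum hP'nn hrnn k
      fun x a hx => hP'sum x a (by omega)).trans ?_
    gcongr
    exact ih fun x a hx => hP'sum x a (by omega)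

end LayeredMDP

open LayeredMDP

theorem stmt13_general {X A : Type*} [Fintype X] [Fintype A]
    (L : ℕ)
    (layer : X → ℕ)
    (x0 : X) (h0 : ∀ x, layer x = 0 ↔ x = x0)
    (P P' : X → A → X → ℝ)
    (hPnn : ∀ x a x', 0 ≤ P x a x')
    (hPsum : ∀ x a, layer x < L → ∑ x', P x a x' = 1)
    (hP'nn : ∀ x a x', 0 ≤ P' x a x')
    (hP'sum : ∀ x a, layer x < L → ∑ x', P' x a x' = 1)
    (π : X → A → ℝ) (hπnn : ∀ x a, 0 ≤ π x a) (hπsum : ∀ x, ∑ a, π x a = 1)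
    (reachP reachP' : X → ℝ)
    (hreachP0 : reachP x0 = 1)
    (hreachP : ∀ x' : X, 1 ≤ layer x' →
      reachP x' = ∑ x ∈ Finset.univ.filter (fun x => layer x + 1 = layer x'),
        ∑ a, reachP x * π x a * P x a x')
    (hreachP'0 : reachP' x0 = 1)
    (hreachP' : ∀ x' : X, 1 ≤ layer x' →
      reachP' x' = ∑ x ∈ Finset.univ.filter (fun x => layer x + 1 = layer x'),
        ∑ a, reachP' x * π x a * P' x a x') :
    ∀ k : ℕ, 1 ≤ k → k < L →
      ∑ x ∈ Finset.univ.filter (fun x => layer x = k), ∑ a,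
          |reachP' x * π x a * (∑ x', P' x a x') - reachP x * π x a * (∑ x', P x a x')| ≤
        ∑ s ∈ Finset.range k, ∑ x ∈ Finset.univ.filter (fun x => layer x = s), ∑ a,
          (reachP x * π x a * (∑ x', P x a x')) * (∑ x', |P' x a x' - P x a x'|) := by
  intro k _ hkL
  have hrnn : ∀ x, 0 ≤ reachP x := IsReach.nonneg hreachP hπnn hPnn fun x hx => by
    rw [(h0 x).1 hx, hreachP0]; exact zero_le_one
  calc _ = ∑ x ∈ univ.filter (fun x => layer x = k), |reachP' x - reachP x| := by
        refine sum_congr rfl fun x hx => ?_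
        have hxL : layer x < L := (mem_filter.1 hx).2 ▸ hkL
        simp only [hP'sum x _ hxL, hPsum x _ hxL, mul_one, ← sub_mul, abs_mul,
          abs_of_nonneg (hπnn x _), ← mul_sum, hπsum]
    _ ≤ ∑ s ∈ range k, ∑ x ∈ univ.filter (fun x => layer x = s), ∑ a,
          reachP x * π x a * ∑ x', |P' x a x' - P x a x'| :=
        IsReach.sum_abs_sub_le hreachP hreachP' hπnn (fun x => (hπsum x).le) hP'nn hrnn
          (fun x hx => by rw [(h0 x).1 hx, hreachP0, hreachP'0]) k
          fun x a hx => (hP'sum x a (hx.trans hkL)).le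
    _ = _ := by
        refine sum_congr rfl fun s hs => sum_congr rfl fun x hx => sum_congr rfl fun a _ => ?_
        have hxL : layer x < L := (mem_filter.1 hx).2 ▸ (mem_range.1 hs).trans hkL
        rw [hPsum x a hxL, mul_one]

/-- Layer-wise comparison of occupancy measures induced by two transition functions `P`, `P'`
and the same policy `π` in an episodic loop-free MDP. Here `reachP` and `reachP'` are the
reach probabilities of `(P,π)` and `(P',π)`, characterized by their recursions, and
`q^{P,π}(x,a) = reachP(x)·π(a|x)·Σ_{x'} P(x'|x,a)`. -/
theorem stmt13 {X A : Type*} [Fintype X] [Fintype A]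
    (L : ℕ) (hL : 1 ≤ L)
    (layer : X → ℕ) (hlayer : ∀ x, layer x ≤ L)
    (x0 : X) (h0 : ∀ x, layer x = 0 ↔ x = x0)
    (P P' : X → A → X → ℝ)
    (hPnn : ∀ x a x', 0 ≤ P x a x')
    (hPsum : ∀ x a, layer x < L → ∑ x', P x a x' = 1)
    (hPsupp : ∀ x a x', layer x < L → P x a x' ≠ 0 → layer x' = layer x + 1)
    (hP'nn : ∀ x a x', 0 ≤ P' x a x')
    (hP'sum : ∀ x a, layer x < L → ∑ x', P' x a x' = 1)
    (hP'supp : ∀ x a x', layer x < L → P' x a x' ≠ 0 → layer x' = layer x + 1)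
    (π : X → A → ℝ) (hπnn : ∀ x a, 0 ≤ π x a) (hπsum : ∀ x, ∑ a, π x a = 1)
    (reachP reachP' : X → ℝ)
    (hreachP0 : reachP x0 = 1)
    (hreachP : ∀ x' : X, 1 ≤ layer x' →
      reachP x' = ∑ x ∈ Finset.univ.filter (fun x => layer x + 1 = layer x'),
        ∑ a, reachP x * π x a * P x a x')
    (hreachP'0 : reachP' x0 = 1)
    (hreachP' : ∀ x' : X, 1 ≤ layer x' →
      reachP' x' = ∑ x ∈ Finset.univ.filter (fun x => layer x + 1 = layer x'),
        ∑ a, reachP' x * π x a * P' x a x') :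
    ∀ k : ℕ, 1 ≤ k → k < L →
      ∑ x ∈ Finset.univ.filter (fun x => layer x = k), ∑ a,
          |reachP' x * π x a * (∑ x', P' x a x') - reachP x * π x a * (∑ x', P x a x')| ≤
        ∑ s ∈ Finset.range k, ∑ x ∈ Finset.univ.filter (fun x => layer x = s), ∑ a,
          (reachP x * π x a * (∑ x', P x a x')) * (∑ x', |P' x a x' - P x a x'|) :=
  stmt13_general L layer x0 h0 P P' hPnn hPsum hP'nn hP'sum π hπnn hπsum reachP reachP' hreachP0
    hreachP hreachP'0 hreachP'
end
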